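/- arXiv:1111.3887 — 5 statements merged into one kernel-verified Lean document; each statement's English description precedes it below -/
import Mathlib

section
/- Let Σ be a relatively closed global Poincaré section of a complete flow ψ on M, with first return time T: Σ → ℝ⁺ continuous and strictly positive, and return times T_n defined by T_0(σ)=0, T_{n+1}(σ) = T_n(σ) + T(r^n(σ)) where r(σ) = ψ_{T(σ)}(σ). Then for each σ ∈ Σ the sequence T_n(σ) is strictly increasing and unbounded as n → ∞. -/
open Filter

/-- For a relatively closed global Poincaré section `S` of a complete
flow `ψ`, with continuous strictly positive first return time `T` and return times
`Tn` defined recursively via the first return map `r`, the sequence `n ↦ Tn n σ`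
is strictly increasing and unbounded as `n → ∞`, for each `σ ∈ S`. -/
theorem return_times_strictMono_unbounded
    {M : Type*} [MetricSpace M]
    (ψ : ℝ → M → M)
    (hψ0 : ∀ x, ψ 0 x = x)
    (hψadd : ∀ s t x, ψ s (ψ t x) = ψ (s + t) x)
    (hψcont : ∀ x, Continuous fun t => ψ t x)
    (S : Set M) (hSclosed : IsClosed S)
    (T : M → ℝ) (hTcont : ContinuousOn T S)
    (hTpos : ∀ σ ∈ S, 0 < T σ)
    (hTmin : ∀ σ ∈ S, ∀ t : ℝ, 0 < t → t < T σ → ψ t σ ∉ S)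
    (hTret : ∀ σ ∈ S, ψ (T σ) σ ∈ S)
    (r : M → M) (hr : ∀ σ, r σ = ψ (T σ) σ)
    (Tn : ℕ → M → ℝ)
    (hTn0 : ∀ σ, Tn 0 σ = 0)
    (hTnrec : ∀ (n : ℕ) (σ : M), Tn (n + 1) σ = Tn n σ + T (r^[n] σ))
    (σ : M) (hσ : σ ∈ S) :
    StrictMono (fun n => Tn n σ) ∧
      Tendsto (fun n => Tn n σ) atTop atTop := by
  -- orbit points stay in S and are given by the flow at time Tn
  have key : ∀ n : ℕ, r^[n] σ ∈ S ∧ r^[n] σ = ψ (Tn n σ) σ := by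
    intro n
    induction n with
    | zero => exact ⟨hσ, by simp [hTn0, hψ0]⟩
    | succ n ih =>
      obtain ⟨hmem, heq⟩ := ih
      constructor
      · rw [Function.iterate_succ_apply', hr]
        exact hTret _ hmem
      · rw [Function.iterate_succ_apply', hr, heq, hψadd, hTnrec]
        rw [← heq, add_comm]
  have hmem : ∀ n, r^[n] σ ∈ S := fun n => (key n).1
  have horb : ∀ n, r^[n] σ = ψ (Tn n σ) σ := fun n => (key n).2
  have hmono : StrictMono (fun n => Tn n σ) := by
    apply strictMono_nat_of_lt_succ
    intro n
    have := hTpos _ (hmem n)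
    simp only [hTnrec]
    linarith
  refine ⟨hmono, ?_⟩
  rcases tendsto_of_monotone hmono.monotone with h | ⟨l, hl⟩
  · exact h
  · exfalso
    -- T (r^[n] σ) → 0
    have h0 : Tendsto (fun n => T (r^[n] σ)) atTop (nhds 0) := by
      have h1 : Tendsto (fun n => Tn (n + 1) σ) atTop (nhds l) :=
        hl.comp (tendsto_add_atTop_nat 1)
      have h2 : Tendsto (fun n => Tn (n + 1) σ - Tn n σ) atTop (nhds (l - l)) := h1.sub hl
      simpa [hTnrec] using h2
    -- r^[n] σ → ψ l σ
    have horbit : Tendsto (fun n => r^[n] σ) atTop (nhds (ψ l σ)) := by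
      have : Tendsto (fun n => ψ (Tn n σ) σ) atTop (nhds (ψ l σ)) :=
        ((hψcont σ).tendsto l).comp hl
      simpa [← horb] using this
    have hlmem : ψ l σ ∈ S :=
      hSclosed.mem_of_tendsto horbit (Eventually.of_forall hmem)
    -- T (r^[n] σ) → T (ψ l σ)
    have hTlim : Tendsto (fun n => T (r^[n] σ)) atTop (nhds (T (ψ l σ))) := by
      refine (hTcont _ hlmem).tendsto.comp ?_
      exact tendsto_nhdsWithin_of_tendsto_nhds_of_eventually_within _ horbit
        (Eventually.of_forall hmem)
    have := tendsto_nhds_unique h0 hTlim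
    have := hTpos _ hlmem
    linarith
end

section
/- Let Σ be a relatively closed global Poincaré section of a complete flow ψ on M, p: Σ × ℝ → M the covering map p(σ,τ) = ψ_τ(σ), and Δ(σ,τ) = (r(σ), τ − T(σ)) the deck transformation, where r is the first return map and T the return time. Then for each x ∈ M, the fiber p^{-1}(x) is exactly one orbit of Δ: if p(σ₀,τ₀) = x, then p^{-1}(x) = {Δ^n(σ₀,τ₀) : n ∈ ℤ}. -/
open Filter

/-- For a relatively closed global Poincaré section `S` of a complete
flow `ψ` with first return time `T`, first return map iterates `rn n` and return
times `Tn n` (strictly increasing and unbounded in both directions), the fiber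
`p⁻¹(x)` of the covering `p(σ,τ) = ψ_τ σ` is exactly the orbit of the deck
transformation `Δ(σ,τ) = (r σ, τ - T σ)`:  if `p(σ₀,τ₀) = x` then
`p⁻¹(x) = {Δⁿ(σ₀,τ₀) : n ∈ ℤ} = {(rn n σ₀, τ₀ - Tn n σ₀) : n ∈ ℤ}`. -/
theorem fiber_eq_deck_orbit
    {M : Type*} (ψ : ℝ → M → M)
    (hψ0 : ∀ x, ψ 0 x = x)
    (hψadd : ∀ s t x, ψ s (ψ t x) = ψ (s + t) x)
    (S : Set M)
    (T : M → ℝ) (hTpos : ∀ σ ∈ S, 0 < T σ)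
    (hTmin : ∀ σ ∈ S, ∀ t : ℝ, 0 < t → t < T σ → ψ t σ ∉ S)
    (rn : ℤ → M → M) (Tn : ℤ → M → ℝ)
    (hrn : ∀ (n : ℤ) (σ : M), σ ∈ S → rn n σ = ψ (Tn n σ) σ ∧ rn n σ ∈ S)
    (hTn0 : ∀ σ, Tn 0 σ = 0)
    (hTn1 : ∀ σ, Tn 1 σ = T σ)
    (hTnadd : ∀ (m n : ℤ) (σ : M), σ ∈ S → Tn (m + n) σ = Tn n σ + Tn m (rn n σ))
    (hmono : ∀ σ ∈ S, StrictMono fun n : ℤ => Tn n σ)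
    (hunbdd : ∀ σ ∈ S,
      Tendsto (fun n : ℤ => Tn n σ) atTop atTop ∧
      Tendsto (fun n : ℤ => Tn n σ) atBot atBot)
    (x : M) (σ₀ : M) (τ₀ : ℝ) (hσ₀ : σ₀ ∈ S) (hx : ψ τ₀ σ₀ = x) :
    {q : M × ℝ | q.1 ∈ S ∧ ψ q.2 q.1 = x} =
      {q : M × ℝ | ∃ n : ℤ, q.1 = rn n σ₀ ∧ q.2 = τ₀ - Tn n σ₀} := by

  classical
  ext q
  obtain ⟨σ, τ⟩ := q
  simp only [Set.mem_setOf_eq]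
  constructor
  · rintro ⟨hσ, hτ⟩
    have hs : ψ (τ - τ₀) σ = σ₀ := by
      have h := congrArg (ψ (-τ₀)) (hτ.trans hx.symm)
      rwa [hψadd, hψadd, neg_add_cancel, hψ0, ← sub_eq_neg_add] at h
    set s := τ - τ₀ with hsdef
    have hbdd : ∃ b : ℤ, ∀ z : ℤ, Tn z σ ≤ s → z ≤ b := by
      obtain ⟨N, hN⟩ := eventually_atTop.mp ((hunbdd σ hσ).1.eventually (eventually_gt_atTop s))
      exact ⟨N, fun z hz => by by_contra h; exact absurd (hN z (le_of_not_ge h)) (not_lt.mpr hz)⟩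
    have hinh : ∃ z : ℤ, Tn z σ ≤ s := by
      obtain ⟨N, hN⟩ := eventually_atBot.mp ((hunbdd σ hσ).2.eventually (eventually_lt_atBot s))
      exact ⟨N, (hN N le_rfl).le⟩
    obtain ⟨m, hm, hmax⟩ := Int.exists_greatest_of_bdd (P := fun z => Tn z σ ≤ s) hbdd hinh
    have hlt : s < Tn (m + 1) σ := by
      by_contra h
      have := hmax (m + 1) (not_lt.mp h)
      omega
    have hT1 : Tn (m + 1) σ = Tn m σ + T (rn m σ) := by
      rw [add_comm m 1, hTnadd 1 m σ hσ, hTn1]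
    have hrmem := (hrn m σ hσ).2
    have hreq := (hrn m σ hσ).1
    have hψt : ψ (s - Tn m σ) (rn m σ) = σ₀ := by
      rw [hreq, hψadd, sub_add_cancel, hs]
    have ht0 : s - Tn m σ = 0 := by
      by_contra h
      have hpos : 0 < s - Tn m σ := lt_of_le_of_ne (sub_nonneg.mpr hm) (Ne.symm h)
      have hltT : s - Tn m σ < T (rn m σ) := by
        have := hlt; rw [hT1] at this; linarith
      exact hTmin (rn m σ) hrmem _ hpos hltT (hψt ▸ hσ₀)
    have hsTn : s = Tn m σ := by linarith [ht0]
    have hσ₀eq : σ₀ = rn m σ := by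
      rw [hreq, ← hsTn, hs]
    have hTnneg : Tn (-m) σ₀ = - Tn m σ := by
      have h := hTnadd (-m) m σ hσ
      rw [neg_add_cancel, hTn0, ← hσ₀eq] at h
      linarith
    refine ⟨-m, ?_, ?_⟩
    · rw [(hrn (-m) σ₀ hσ₀).1, hTnneg, hσ₀eq, hreq, hψadd, neg_add_cancel, hψ0]
    · rw [hTnneg]
      have : τ = s + τ₀ := by rw [hsdef]; ring
      rw [this, hsTn]; ring
  · rintro ⟨n, hσ, hτ⟩
    obtain ⟨hreq, hmem⟩ := hrn n σ₀ hσ₀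
    refine ⟨hσ ▸ hmem, ?_⟩
    rw [hσ, hτ, hreq, hψadd, sub_add_cancel, hx]
end

section
/- (Discrete Noether theorem, forward direction.) Let (M, μ) be a symplectic manifold and f: M → M a symplectic diffeomorphism (f^*μ = μ) with connected M. Suppose Y is a Hamiltonian vector field with Hamiltonian I (i_Y μ = dI) such that f^*Y = Y. Then I ∘ f = I + c for some constant c; and if f has a recurrent point (a point x* such that f^{t_i}(x*) → x* along some sequence t_i → ∞) then c = 0, so I is an invariant of f. -/
/-!
Because `f` preserves `μ` and commutes with the flow direction `Y`, it pulls the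
Hamiltonian form `i_Y μ = dI` back to itself, so `d(I ∘ f) = dI`; on a connected
space `I ∘ f - I` is therefore a constant `c`. Along an orbit `I (fⁿ x) = I x + n c`,
and at a recurrent point the left side returns arbitrarily close to `I x` for
arbitrarily large `n`, which forces `c = 0`.
-/

open Filter Function Topology

section Symplectic

variable {𝕜 E : Type*} [NontriviallyNormedField 𝕜] [NormedAddCommGroup E] [NormedSpace 𝕜 E]
  {μ : E → E →ₗ[𝕜] E →ₗ[𝕜] 𝕜} {f : E → E} {Y : E → E} {I : E → 𝕜}

theorem fderiv_comp_eq_of_hamiltonian_symmetry (hHam : ∀ x v, μ x (Y x) v = fderiv 𝕜 I x v)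
    (hsymp : ∀ x u v, μ (f x) (fderiv 𝕜 f x u) (fderiv 𝕜 f x v) = μ x u v)
    (hsymY : ∀ x, fderiv 𝕜 f x (Y x) = Y (f x)) {x : E}
    (hf : DifferentiableAt 𝕜 f x) (hI : DifferentiableAt 𝕜 I (f x)) :
    fderiv 𝕜 (I ∘ f) x = fderiv 𝕜 I x := by
  ext v
  calc fderiv 𝕜 (I ∘ f) x v
      = fderiv 𝕜 I (f x) (fderiv 𝕜 f x v) := by rw [fderiv_comp x hI hf]; rfl
    _ = μ (f x) (fderiv 𝕜 f x (Y x)) (fderiv 𝕜 f x v) := by rw [hsymY, hHam]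
    _ = fderiv 𝕜 I x v := by rw [hsymp, hHam]

end Symplectic

theorem Function.Semiconj.apply_iterate_of_add {α M : Type*} [AddMonoid M] {I : α → M}
    {f : α → α} {c : M} (h : Semiconj I f (· + c)) (n : ℕ) (x : α) :
    I (f^[n] x) = I x + n • c :=
  (h.iterate_right n x).trans (add_right_iterate_apply c (I x))

theorem eq_zero_of_tendsto_natCast_mul {ι : Type*} {l : Filter ι} [l.NeBot] {t : ι → ℕ}
    (ht : Tendsto t l atTop) {c : ℝ} (hc : Tendsto (fun i => (t i : ℝ) * c) l (𝓝 0)) :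
    c = 0 := by
  by_contra hc0
  have hto0 : Tendsto (fun i => (t i : ℝ)) l (𝓝 0) := by
    simpa [mul_inv_cancel_right₀ hc0] using hc.mul_const c⁻¹
  exact not_tendsto_nhds_of_tendsto_atTop (tendsto_natCast_atTop_atTop.comp ht) 0 hto0

theorem Function.Semiconj.eq_zero_of_tendsto_iterate {X : Type*} [TopologicalSpace X]
    {I : X → ℝ} {f : X → X} {c : ℝ} (h : Semiconj I f (· + c)) (hI : Continuous I) {x : X}
    {t : ℕ → ℕ} (ht : Tendsto t atTop atTop)
    (hrec : Tendsto (fun i => f^[t i] x) atTop (𝓝 x)) : c = 0 := by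
  have hI_rec : Tendsto (fun i => I x + (t i : ℝ) * c) atTop (𝓝 (I x + 0)) := by
    simpa only [comp_def, h.apply_iterate_of_add, nsmul_eq_mul, add_zero] using
      (hI.tendsto x).comp hrec
  exact eq_zero_of_tendsto_natCast_mul ht ((tendsto_const_add_iff (I x)).mp hI_rec)

/-- discrete Noether theorem, forward direction: on a connected
symplectic manifold (modeled on a normed space `E`, symplectic form `μ`), if `f`
is symplectic (`f^*μ = μ`) and `Y` is a Hamiltonian vector field with
Hamiltonian `I` (`i_Y μ = dI`) which is a symmetry of `f` (`f^*Y = Y`, i.e.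
`Df(x)(Y x) = Y (f x)`), then `I ∘ f = I + c` for a constant `c`; and if `f`
has a recurrent point then `c = 0`, so `I` is an invariant of `f`. -/
theorem discrete_noether_forward
    {E : Type*} [NormedAddCommGroup E] [NormedSpace ℝ E]
    (μ : E → E →ₗ[ℝ] E →ₗ[ℝ] ℝ)
    (f : E → E) (hf : Differentiable ℝ f)
    (Y : E → E) (I : E → ℝ) (hI : Differentiable ℝ I)
    (hHam : ∀ x v, μ x (Y x) v = fderiv ℝ I x v)          -- i_Y μ = dI
    (hsymp : ∀ x u v, μ (f x) (fderiv ℝ f x u) (fderiv ℝ f x v) = μ x u v)  -- f^*μ = μ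
    (hsymY : ∀ x, fderiv ℝ f x (Y x) = Y (f x)) :          -- f^*Y = Y
    ∃ c : ℝ, (∀ x, I (f x) = I x + c) ∧
      ((∃ (xstar : E) (t : ℕ → ℕ), StrictMono t ∧
          Tendsto (fun i => f^[t i] xstar) atTop (nhds xstar)) → c = 0) := by
  obtain ⟨c, hc⟩ := isOpen_univ.exists_eq_add_of_fderiv_eq isPreconnected_univ
    (hI.comp hf).differentiableOn hI.differentiableOn fun x _ =>
      fderiv_comp_eq_of_hamiltonian_symmetry hHam hsymp hsymY (hf x) (hI (f x))
  have hsemiconj : Semiconj I f (· + c) := fun x => hc (Set.mem_univ x)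
  refine ⟨c, hsemiconj, ?_⟩
  rintro ⟨xstar, t, ht, hrec⟩
  exact hsemiconj.eq_zero_of_tendsto_iterate hI.continuous ht.tendsto_atTop hrec
end

section
/- The map f(x,y,τ) = (x+c, y+g(x)) on ℝ² is symplectic with respect to dx ∧ dy, has the translation symmetry Y = ∂/∂y generated by the Hamiltonian I(x,y) = x, yet for any c ≠ 0, I is not invariant under f (indeed I ∘ f = I + c), and f has no recurrent orbits: no point x* satisfies f^{t_i}(x*) → x* for any sequence t_i → ∞. Hence the recurrence hypothesis in the discrete Noether theorem is necessary. -/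
/-!
The coordinate `I = x` is a continuous function that `f` translates by the nonzero constant `c`,
so along an orbit `I (f^[n] p) = I p + n • c` drifts off to infinity; a subsequence of the orbit
converging back to `p` would force `I` to converge back to `I p`. The derivative of `f` is the
shear `(u, v) ↦ (u, v + g' x u)`, which has determinant one and fixes `∂/∂y`.
-/

open Filter Function Topology

theorem not_tendsto_iterate_of_semiconj_add {X E : Type*} [TopologicalSpace X]
    [NormedAddCommGroup E] [NormedSpace ℝ E] {f : X → X} {I : X → E} {c : E}
    (hI : Continuous I) (hf : Semiconj I f (· + c)) (hc : c ≠ 0)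
    {t : ℕ → ℕ} (ht : Tendsto t atTop atTop) (x : X) :
    ¬ Tendsto (fun i => f^[t i] x) atTop (𝓝 x) := by
  intro hrec
  have hI_orbit : Tendsto (fun i => I x + t i • c) atTop (𝓝 (I x)) := by
    simpa only [comp_def, (hf.iterate_right _).eq, add_right_iterate_apply]
      using (hI.tendsto x).comp hrec
  have hdrift_zero : Tendsto (fun i => ‖t i • c‖) atTop (𝓝 0) := by
    simpa using (hI_orbit.sub_const (I x)).norm
  have hdrift_top : Tendsto (fun i => ‖t i • c‖) atTop atTop := by
    simp only [RCLike.norm_nsmul ℝ]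
    exact ht.atTop_nsmul_const (norm_pos_iff.2 hc)
  exact not_tendsto_nhds_of_tendsto_atTop hdrift_top _ hdrift_zero

def skewTranslation (c : ℝ) (g : ℝ → ℝ) (p : ℝ × ℝ) : ℝ × ℝ := (p.1 + c, p.2 + g p.1)

theorem fderiv_skewTranslation_apply (c : ℝ) {g : ℝ → ℝ} {p : ℝ × ℝ}
    (hg : DifferentiableAt ℝ g p.1) (u : ℝ × ℝ) :
    fderiv ℝ (skewTranslation c g) p u = (u.1, u.2 + deriv g p.1 * u.1) := by
  have hD : HasFDerivAt (skewTranslation c g)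
      ((ContinuousLinearMap.fst ℝ ℝ ℝ).prod
        (ContinuousLinearMap.snd ℝ ℝ ℝ + deriv g p.1 • ContinuousLinearMap.fst ℝ ℝ ℝ)) p :=
    (hasFDerivAt_fst.add_const c).prodMk
      (hasFDerivAt_snd.add (hg.hasDerivAt.comp_hasFDerivAt p hasFDerivAt_fst))
  simp [hD.fderiv, smul_eq_mul]

/-- The map `f(x,y) = (x + c, y + g x)` on `ℝ²` is symplectic for
`dx ∧ dy`, has the translation symmetry `Y = ∂/∂y` (i.e. `Df(p)(0,1) = (0,1)`),
generated by the Hamiltonian `I(x,y) = x`; yet for `c ≠ 0` the function `I` is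
not invariant (indeed `I ∘ f = I + c`), and `f` has no recurrent orbits: no
point `x*` satisfies `f^[t i](x*) → x*` along a sequence `t i → ∞`.  Hence the
recurrence hypothesis in the discrete Noether theorem is necessary. -/
theorem noether_recurrence_necessary
    (c : ℝ) (hc : c ≠ 0) (g : ℝ → ℝ) (hg : Differentiable ℝ g)
    (f : ℝ × ℝ → ℝ × ℝ) (hfdef : ∀ p, f p = (p.1 + c, p.2 + g p.1)) :
    -- f is symplectic: f^*(dx ∧ dy) = dx ∧ dy
    (∀ (p u v : ℝ × ℝ),
      (fderiv ℝ f p u).1 * (fderiv ℝ f p v).2 - (fderiv ℝ f p u).2 * (fderiv ℝ f p v).1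
        = u.1 * v.2 - u.2 * v.1) ∧
    -- Y = ∂/∂y is a symmetry: f^*Y = Y
    (∀ p : ℝ × ℝ, fderiv ℝ f p (0, 1) = ((0 : ℝ), (1 : ℝ))) ∧
    -- I(x,y) = x is not invariant: I ∘ f = I + c with c ≠ 0
    (∀ p : ℝ × ℝ, (f p).1 = p.1 + c) ∧
    -- f has no recurrent points
    (¬ ∃ (xstar : ℝ × ℝ) (t : ℕ → ℕ), StrictMono t ∧
        Tendsto (fun i => f^[t i] xstar) atTop (nhds xstar)) := by
  obtain rfl : f = skewTranslation c g := funext hfdef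
  have hDf (p u : ℝ × ℝ) := fderiv_skewTranslation_apply c (hg p.1) u
  refine ⟨fun p u v => ?_, fun p => by simp [hDf], fun p => rfl, ?_⟩
  · simp only [hDf]
    ring
  · rintro ⟨x, t, ht, hrec⟩
    exact not_tendsto_iterate_of_semiconj_add continuous_fst (fun p => rfl) hc
      ht.tendsto_atTop x hrec
end

section
/- The Lyness map f(x,y) = (y, (a+y)/x), for a > 0, is a diffeomorphism of the open positive quadrant ℝ₊² that preserves the symplectic form μ = (1/(xy)) dx ∧ dy, and the function I(x,y) = (1+x)(1+y)(a+x+y)/(xy) is an invariant of f: I ∘ f = I on ℝ₊². -/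
/-- For `a > 0` the Lyness map `f(x,y) = (y, (a+y)/x)` is a
diffeomorphism of the open positive quadrant `Q = ℝ₊²` preserving the
symplectic form `μ = (1/(xy)) dx ∧ dy`, and
`I(x,y) = (1+x)(1+y)(a+x+y)/(xy)` is an invariant: `I ∘ f = I` on `Q`. -/
theorem lyness_map_symplectic_invariant
    (a : ℝ) (ha : 0 < a)
    (f : ℝ × ℝ → ℝ × ℝ) (hfdef : ∀ p, f p = (p.2, (a + p.2) / p.1)) :
    -- f is a bijection of the positive quadrant onto itself:
    Set.BijOn f {p : ℝ × ℝ | 0 < p.1 ∧ 0 < p.2} {p : ℝ × ℝ | 0 < p.1 ∧ 0 < p.2} ∧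
    -- f is smooth on the quadrant:
    ContDiffOn ℝ (⊤ : ℕ∞) f {p : ℝ × ℝ | 0 < p.1 ∧ 0 < p.2} ∧
    -- f preserves μ = (1/(xy)) dx ∧ dy:
    (∀ p ∈ {p : ℝ × ℝ | 0 < p.1 ∧ 0 < p.2}, ∀ u v : ℝ × ℝ,
      (1 / ((f p).1 * (f p).2)) *
          ((fderiv ℝ f p u).1 * (fderiv ℝ f p v).2 -
            (fderiv ℝ f p u).2 * (fderiv ℝ f p v).1)
        = (1 / (p.1 * p.2)) * (u.1 * v.2 - u.2 * v.1)) ∧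
    -- I is an invariant of f:
    (∀ p ∈ {p : ℝ × ℝ | 0 < p.1 ∧ 0 < p.2},
      (1 + (f p).1) * (1 + (f p).2) * (a + (f p).1 + (f p).2) / ((f p).1 * (f p).2)
        = (1 + p.1) * (1 + p.2) * (a + p.1 + p.2) / (p.1 * p.2)) := by
  have hf : f = fun p : ℝ × ℝ => (p.2, (a + p.2) / p.1) := funext hfdef
  subst hf
  refine ⟨⟨?_, ?_, ?_⟩, ?_, ?_, ?_⟩
  · -- maps to
    rintro ⟨x, y⟩ ⟨hx, hy⟩
    exact ⟨hy, div_pos (by linarith) hx⟩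
  · -- inj
    rintro ⟨x, y⟩ ⟨hx, hy⟩ ⟨x', y'⟩ ⟨hx', hy'⟩ h
    simp only [Prod.mk.injEq] at h
    obtain ⟨h1, h2⟩ := h
    subst h1
    have hay : a + y ≠ 0 := by positivity
    field_simp at h2
    simp [h2]
  · -- surj
    rintro ⟨x, y⟩ ⟨hx, hy⟩
    refine ⟨((a + x) / y, x), ⟨div_pos (by linarith) hy, hx⟩, ?_⟩
    have hax : a + x ≠ 0 := by positivity
    simp only [Prod.mk.injEq]
    exact ⟨trivial, by field_simp⟩
  · -- smooth
    apply ContDiffOn.prodMk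
    · exact contDiffOn_snd
    · exact ContDiffOn.div
        (ContDiffOn.add contDiffOn_const contDiffOn_snd) contDiffOn_fst
        (fun p hp => ne_of_gt hp.1)
  · -- symplectic
    rintro ⟨x, y⟩ ⟨hx, hy⟩ u v
    have hx0 : x ≠ 0 := ne_of_gt hx
    have hd := (((hasFDerivAt_const a ((x, y) : ℝ × ℝ)).add hasFDerivAt_snd).mul
      ((hasFDerivAt_inv hx0).comp ((x, y) : ℝ × ℝ) (hasFDerivAt_fst (𝕜 := ℝ) (p := ((x, y) : ℝ × ℝ)))))
    have hD : HasFDerivAt (fun p : ℝ × ℝ => (p.2, (a + p.2) * p.1⁻¹))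
        ((ContinuousLinearMap.snd ℝ ℝ ℝ).prod
          ((a + y) • (ContinuousLinearMap.smulRight (1 : ℝ →L[ℝ] ℝ) (-(x ^ 2)⁻¹)).comp
              (ContinuousLinearMap.fst ℝ ℝ ℝ) +
            x⁻¹ • (0 + ContinuousLinearMap.snd ℝ ℝ ℝ))) (x, y) := by
      exact HasFDerivAt.prodMk (show HasFDerivAt (fun p : ℝ × ℝ => p.2)
        (ContinuousLinearMap.snd ℝ ℝ ℝ) (x, y) from hasFDerivAt_snd) hd
    have hay : a + y ≠ 0 := by positivity
    have hy0 : y ≠ 0 := ne_of_gt hy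
    simp only [div_eq_mul_inv]
    rw [hD.fderiv]
    simp [ContinuousLinearMap.smulRight_apply]
    field_simp
    ring
  · -- invariant
    rintro ⟨x, y⟩ ⟨hx, hy⟩
    have hx0 : x ≠ 0 := ne_of_gt hx
    have hy0 : y ≠ 0 := ne_of_gt hy
    have hay : a + y ≠ 0 := by positivity
    simp only
    field_simp
    ring
end
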